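/- arXiv:2501.04924 — 3 statements merged into one kernel-verified Lean document; each statement's English description precedes it below -/
import Mathlib

section
/- Let A ≥ 0 and D > 0 be real numbers. Define φ : (−1, ∞) → ℝ by φ(ε) = log(1+ε) − ε + (1+ε)·A/(A+D). Then φ is strictly concave, attains its maximum at the unique point ε* = A/D, and φ(ε*) = log(1 + A/D). -/
open Real Set

lemma max_aux (A D : ℝ) (hA : 0 ≤ A) (hD : 0 < D) {ε : ℝ} (hε : -1 < ε) :
    Real.log (1 + ε) - ε + (1 + ε) * A / (A + D) ≤
      Real.log (1 + A / D) - A / D + (1 + A / D) * A / (A + D) := by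
  have hAD : 0 < A + D := by linarith
  have h1ε : 0 < 1 + ε := by linarith
  have hstar : 1 + A / D = (A + D) / D := by field_simp; ring
  have ht : 0 < (1 + ε) / (1 + A / D) := by
    apply div_pos h1ε; rw [hstar]; positivity
  have hlog := Real.log_le_sub_one_of_pos ht
  rw [Real.log_div (ne_of_gt h1ε) (by rw [hstar]; positivity)] at hlog
  have hkey : (1 + ε) / (1 + A / D) = (1 + ε) * D / (A + D) := by
    rw [hstar]; field_simp
  rw [hkey] at hlog
  have h2 : (1 + ε) * D / (A + D) - 1 =
      (-(A/D) + (1 + A/D) * A / (A + D)) - (-ε + (1 + ε) * A / (A + D)) := by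
    field_simp; ring
  linarith [hlog]

lemma max_strict_aux (A D : ℝ) (hA : 0 ≤ A) (hD : 0 < D) {ε : ℝ} (hε : -1 < ε)
    (hne : ε ≠ A / D) :
    Real.log (1 + ε) - ε + (1 + ε) * A / (A + D) <
      Real.log (1 + A / D) - A / D + (1 + A / D) * A / (A + D) := by
  have hAD : 0 < A + D := by linarith
  have h1ε : 0 < 1 + ε := by linarith
  have hstar : 1 + A / D = (A + D) / D := by field_simp; ring
  have hs : 0 < 1 + A / D := by rw [hstar]; positivity
  have ht : 0 < (1 + ε) / (1 + A / D) := div_pos h1ε hs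
  have htne : (1 + ε) / (1 + A / D) ≠ 1 := by
    intro h
    apply hne
    have := (div_eq_one_iff_eq (ne_of_gt hs)).mp h
    linarith
  have hlog := Real.log_lt_sub_one_of_pos ht htne
  rw [Real.log_div (ne_of_gt h1ε) (ne_of_gt hs)] at hlog
  have hkey : (1 + ε) / (1 + A / D) = (1 + ε) * D / (A + D) := by
    rw [hstar]; field_simp
  rw [hkey] at hlog
  have h2 : (1 + ε) * D / (A + D) - 1 =
      (-(A/D) + (1 + A/D) * A / (A + D)) - (-ε + (1 + ε) * A / (A + D)) := by
    field_simp; ring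
  linarith [hlog]

/-- Scalar content of Lemma 3 (Lagrangian dual transform): for `A ≥ 0`, `D > 0`,
the function `φ(ε) = log(1+ε) - ε + (1+ε)·A/(A+D)` is strictly concave on `(-1, ∞)`,
attains its maximum there at the unique point `ε* = A/D`, and `φ(ε*) = log(1 + A/D)`. -/
theorem stmt_4 (A D : ℝ) (hA : 0 ≤ A) (hD : 0 < D) :
    StrictConcaveOn ℝ (Set.Ioi (-1 : ℝ))
      (fun ε => Real.log (1 + ε) - ε + (1 + ε) * A / (A + D)) ∧
    IsMaxOn (fun ε => Real.log (1 + ε) - ε + (1 + ε) * A / (A + D))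
      (Set.Ioi (-1 : ℝ)) (A / D) ∧
    (∀ ε ∈ Set.Ioi (-1 : ℝ),
      IsMaxOn (fun ε => Real.log (1 + ε) - ε + (1 + ε) * A / (A + D))
        (Set.Ioi (-1 : ℝ)) ε → ε = A / D) ∧
    Real.log (1 + A / D) - A / D + (1 + A / D) * A / (A + D) =
      Real.log (1 + A / D) := by
  have hAD : 0 < A + D := by linarith
  have hstarpos : (-1 : ℝ) < A / D := by
    have : 0 ≤ A / D := by positivity
    linarith
  refine ⟨?_, ?_, ?_, ?_⟩
  · constructor
    · exact convex_Ioi _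
    · intro x hx y hy hxy a b ha hb hab
      simp only [smul_eq_mul] at *
      have hx' : (0:ℝ) < 1 + x := by linarith [mem_Ioi.mp hx]
      have hy' : (0:ℝ) < 1 + y := by linarith [mem_Ioi.mp hy]
      have hlog := strictConcaveOn_log_Ioi.2 (mem_Ioi.mpr hx') (mem_Ioi.mpr hy')
        (by intro h; apply hxy; linarith) ha hb hab
      simp only [smul_eq_mul] at hlog
      have harg : a * (1 + x) + b * (1 + y) = 1 + (a * x + b * y) := by
        linarith [hab]
      rw [harg] at hlog
      have hlin : a * (-x + (1 + x) * A / (A + D)) + b * (-y + (1 + y) * A / (A + D)) =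
          -(a * x + b * y) + (1 + (a * x + b * y)) * A / (A + D) := by
        field_simp
        nlinarith [hab]
      have expand : ∀ z : ℝ, Real.log (1 + z) - z + (1 + z) * A / (A + D) =
          Real.log (1 + z) + (-z + (1 + z) * A / (A + D)) := by intro z; ring
      rw [expand, expand, expand]
      linarith [hlog, hlin]
  · intro ε hε
    simp only [Set.mem_setOf_eq]
    exact max_aux A D hA hD (mem_Ioi.mp hε)
  · intro ε hε hmax
    by_contra hne
    have h1 := hmax (mem_Ioi.mpr hstarpos)
    simp only [Set.mem_setOf_eq] at h1
    have h2 := max_strict_aux A D hA hD (mem_Ioi.mp hε) hne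
    linarith
  · have : -(A / D) + (1 + A / D) * A / (A + D) = 0 := by field_simp; ring
    linarith
end

section
/- Let X be a nonempty set, K ∈ ℕ, and for each k ∈ {1,…,K} let s_k : X → [0,∞) and d_k : X → (0,∞) be functions and b_k ≥ 0 be weights. Then sup over x ∈ X of Σ_{k=1}^{K} b_k·log(1 + s_k(x)/d_k(x)) equals sup over pairs (x, ε) with x ∈ X and ε = (ε_1,…,ε_K) ∈ (−1, ∞)^K of Σ_{k=1}^{K} b_k·(log(1+ε_k) − ε_k + (1+ε_k)·s_k(x)/(s_k(x)+d_k(x))); moreover for fixed x the inner supremum over ε is attained at ε_k = s_k(x)/d_k(x). -/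
lemma fp_key (s d ε : ℝ) (hs : 0 ≤ s) (hd : 0 < d) (hε : -1 < ε) :
    Real.log (1 + ε) - ε + (1 + ε) * s / (s + d) ≤ Real.log (1 + s / d) := by
  have hsd : 0 < s + d := by linarith
  have h1 : 0 < 1 + ε := by linarith
  have ht : 0 < (1 + ε) * d / (s + d) := by positivity
  have hlog : Real.log ((1 + ε) * d / (s + d)) ≤ (1 + ε) * d / (s + d) - 1 :=
    Real.log_le_sub_one_of_pos ht
  have h2 : (0:ℝ) < 1 + s / d := by positivity
  have heq : Real.log (1 + ε) = Real.log ((1 + ε) * d / (s + d)) + Real.log (1 + s / d) := by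
    rw [← Real.log_mul (ne_of_gt ht) (ne_of_gt h2)]
    congr 1
    field_simp
    ring
  have hz : (1 + ε) * d / (s + d) - 1 - ε + (1 + ε) * s / (s + d) = 0 := by
    field_simp
    ring
  linarith

lemma fp_eq (s d : ℝ) (hs : 0 ≤ s) (hd : 0 < d) :
    Real.log (1 + s / d) - s / d + (1 + s / d) * s / (s + d) = Real.log (1 + s / d) := by
  have hsd : 0 < s + d := by linarith
  have : (1 + s / d) * s / (s + d) = s / d := by
    field_simp
    ring
  rw [this]; ring

/-- Lemma 3 (abstract form, FP Lagrangian dual transform): maximizing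
`∑ k, b k * log(1 + s k x / d k x)` over `x ∈ X` equals the joint maximization over `x`
and auxiliary variables `ε k ∈ (-1, ∞)` of
`∑ k, b k * (log(1+ε k) - ε k + (1+ε k)·s k x/(s k x + d k x))`; for fixed `x`
the inner supremum is attained at `ε k = s k x / d k x`. -/
theorem stmt_5 {X : Type*} [Nonempty X] (K : ℕ) (s d : Fin K → X → ℝ) (b : Fin K → ℝ)
    (hs : ∀ k x, 0 ≤ s k x) (hd : ∀ k x, 0 < d k x) (hb : ∀ k, 0 ≤ b k) :
    (sSup {v : ℝ | ∃ x : X, v = ∑ k, b k * Real.log (1 + s k x / d k x)} =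
      sSup {v : ℝ | ∃ (x : X) (ε : Fin K → ℝ), (∀ k, -1 < ε k) ∧
        v = ∑ k, b k * (Real.log (1 + ε k) - ε k +
              (1 + ε k) * s k x / (s k x + d k x))}) ∧
    (∀ x : X,
      IsMaxOn (fun ε : Fin K → ℝ => ∑ k, b k * (Real.log (1 + ε k) - ε k +
          (1 + ε k) * s k x / (s k x + d k x)))
        {ε : Fin K → ℝ | ∀ k, -1 < ε k}
        (fun k => s k x / d k x)) := by
  set F : X → ℝ := fun x => ∑ k, b k * Real.log (1 + s k x / d k x) with hF
  set G : X → (Fin K → ℝ) → ℝ := fun x ε => ∑ k, b k * (Real.log (1 + ε k) - ε k +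
      (1 + ε k) * s k x / (s k x + d k x)) with hG
  have hstar : ∀ x, G x (fun k => s k x / d k x) = F x := by
    intro x
    apply Finset.sum_congr rfl
    intro k _
    rw [fp_eq (s k x) (d k x) (hs k x) (hd k x)]
  have hle : ∀ x (ε : Fin K → ℝ), (∀ k, -1 < ε k) → G x ε ≤ F x := by
    intro x ε hε
    apply Finset.sum_le_sum
    intro k _
    exact mul_le_mul_of_nonneg_left (fp_key (s k x) (d k x) (ε k) (hs k x) (hd k x) (hε k)) (hb k)
  set A := {v : ℝ | ∃ x : X, v = F x} with hA
  set B := {v : ℝ | ∃ (x : X) (ε : Fin K → ℝ), (∀ k, -1 < ε k) ∧ v = G x ε} with hB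
  have hAB : A ⊆ B := by
    rintro v ⟨x, rfl⟩
    exact ⟨x, fun k => s k x / d k x,
      fun k => lt_of_lt_of_le (by norm_num) (div_nonneg (hs k x) (hd k x).le),
      (hstar x).symm⟩
  have hdom : ∀ v ∈ B, ∃ w ∈ A, v ≤ w := by
    rintro v ⟨x, ε, hε, rfl⟩
    exact ⟨F x, ⟨x, rfl⟩, hle x ε hε⟩
  have hAne : A.Nonempty := ⟨F Classical.ofNonempty, Classical.ofNonempty, rfl⟩
  constructor
  · by_cases hbdd : BddAbove A
    · have hBbdd : BddAbove B := by
        obtain ⟨M, hM⟩ := hbdd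
        refine ⟨M, fun v hv => ?_⟩
        obtain ⟨w, hw, hvw⟩ := hdom v hv
        exact hvw.trans (hM hw)
      refine le_antisymm (csSup_le_csSup hBbdd hAne hAB) ?_
      refine csSup_le (hAne.mono hAB) ?_
      intro v hv
      obtain ⟨w, hw, hvw⟩ := hdom v hv
      exact hvw.trans (le_csSup hbdd hw)
    · have hBbdd : ¬ BddAbove B := fun h => hbdd (h.mono hAB)
      rw [Real.sSup_of_not_bddAbove hbdd, Real.sSup_of_not_bddAbove hBbdd]
  · intro x
    rw [isMaxOn_iff]
    intro ε hε
    show G x ε ≤ G x (fun k => s k x / d k x)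
    rw [hstar x]
    exact hle x ε hε
end

section
/- Let N ∈ ℕ, let Φ ∈ ℂ^{N×N} be a Hermitian positive semidefinite matrix, and let v ∈ ℂ^N. For λ > 0 the matrix λ·1 + Φ is invertible, and the function λ ↦ vᴴ·(λ·1 + Φ)⁻¹·Φ·(λ·1 + Φ)⁻¹·v is antitone (monotonically nonincreasing) on (0, ∞). -/
/-!
For `a ≥ 0` and `t > 0` the continuous functional calculus turns
`(t + a)⁻¹ a (t + a)⁻¹` into `g_t(a)` with `g_t(x) = x / (t + x)²`. On the spectrum of `a`,
which lies in `[0, ∞)`, `g_t` decreases pointwise in `t`, so by monotonicity of the functional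
calculus `t ↦ g_t(a)` is antitone in the Loewner order; the quadratic form `M ↦ vᴴ M v` is
monotone in that order.
-/

open Matrix
open scoped ComplexOrder

lemma const_add_pos_of_mem_spectrum {A : Type*} [Ring A] [PartialOrder A] [Algebra ℝ A]
    [NonnegSpectrumClass ℝ A] {a : A} (ha : 0 ≤ a) {t : ℝ} (ht : 0 < t) {x : ℝ}
    (hx : x ∈ spectrum ℝ a) : 0 < t + x :=
  add_pos_of_pos_of_nonneg ht (spectrum_nonneg_of_nonneg ha hx)

section Resolvent

variable {A : Type*} [TopologicalSpace A] [Ring A] [StarRing A] [Algebra ℝ A]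
  [ContinuousFunctionalCalculus ℝ A IsSelfAdjoint] {a : A} {t : ℝ}

lemma algebraMap_add_eq_cfc (ha : IsSelfAdjoint a) (t : ℝ) :
    algebraMap ℝ A t + a = cfc (fun x : ℝ => t + x) a := by
  rw [cfc_const_add t (fun x => x) a, cfc_id' ℝ a]

variable [PartialOrder A] [StarOrderedRing A] [NonnegSpectrumClass ℝ A]

lemma isUnit_algebraMap_add (ha : 0 ≤ a) (ht : 0 < t) : IsUnit (algebraMap ℝ A t + a) := by
  rw [algebraMap_add_eq_cfc ha.isSelfAdjoint, isUnit_cfc_iff _ a]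
  exact fun x hx => (const_add_pos_of_mem_spectrum ha ht hx).ne'

lemma cfc_inv_const_add (ha : 0 ≤ a) (ht : 0 < t) :
    cfc (fun x : ℝ => (t + x)⁻¹) a = Ring.inverse (algebraMap ℝ A t + a) := by
  rw [algebraMap_add_eq_cfc ha.isSelfAdjoint, cfc_inv _ a]
  exact fun x hx => (const_add_pos_of_mem_spectrum ha ht hx).ne'

lemma inverse_mul_mul_inverse_eq_cfc (ha : 0 ≤ a) (ht : 0 < t) :
    Ring.inverse (algebraMap ℝ A t + a) * a * Ring.inverse (algebraMap ℝ A t + a) =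
      cfc (fun x : ℝ => x / (t + x) ^ 2) a := by
  have hc : ContinuousOn (fun x : ℝ => (t + x)⁻¹) (spectrum ℝ a) :=
    ContinuousOn.inv₀ (by fun_prop) fun x hx => (const_add_pos_of_mem_spectrum ha ht hx).ne'
  calc _ = cfc (fun x : ℝ => (t + x)⁻¹ * x * (t + x)⁻¹) a := by
        rw [cfc_mul (fun x => (t + x)⁻¹ * x) _ a (hc.mul continuousOn_id),
          cfc_mul _ (fun x => x) a, cfc_id' ℝ a, cfc_inv_const_add ha ht]
    _ = _ := cfc_congr fun x _ => by rw [div_eq_mul_inv, ← inv_pow]; ring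

lemma antitoneOn_inverse_mul_mul_inverse (ha : 0 ≤ a) :
    AntitoneOn (fun t : ℝ =>
      Ring.inverse (algebraMap ℝ A t + a) * a * Ring.inverse (algebraMap ℝ A t + a))
      (Set.Ioi 0) := by
  intro s hs t ht hst
  have hcont : ∀ u : ℝ, 0 < u → ContinuousOn (fun x : ℝ => x / (u + x) ^ 2) (spectrum ℝ a) :=
    fun u hu => continuousOn_id.div (by fun_prop) fun x hx =>
      (pow_pos (const_add_pos_of_mem_spectrum ha hu hx) 2).ne'
  simp only [inverse_mul_mul_inverse_eq_cfc ha hs, inverse_mul_mul_inverse_eq_cfc ha ht]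
  refine cfc_mono (fun x hx => ?_) (hcont t ht) (hcont s hs)
  have hx₀ : 0 ≤ x := spectrum_nonneg_of_nonneg ha hx
  have hsx : 0 < s + x := const_add_pos_of_mem_spectrum ha hs hx
  gcongr

end Resolvent

namespace Matrix

open scoped MatrixOrder

variable {𝕜 n : Type*} [RCLike 𝕜] [Fintype n]

lemma monotone_dotProduct_mulVec (v : n → 𝕜) :
    Monotone fun A : Matrix n n 𝕜 => star v ⬝ᵥ (A *ᵥ v) := fun A B hAB => by
  simpa [sub_mulVec] using (le_iff.mp hAB).dotProduct_mulVec_nonneg v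

variable [DecidableEq n]

lemma ofReal_smul_one_eq_algebraMap (r : ℝ) :
    (r : 𝕜) • (1 : Matrix n n 𝕜) = algebraMap ℝ (Matrix n n 𝕜) r := by
  rw [Algebra.algebraMap_eq_smul_one, RCLike.real_smul_eq_coe_smul (K := 𝕜)]

lemma PosSemidef.isUnit_ofReal_smul_one_add {Φ : Matrix n n 𝕜} (hΦ : Φ.PosSemidef) {t : ℝ}
    (ht : 0 < t) : IsUnit ((t : 𝕜) • (1 : Matrix n n 𝕜) + Φ) := by
  rw [ofReal_smul_one_eq_algebraMap]
  exact isUnit_algebraMap_add hΦ.nonneg ht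

lemma PosSemidef.antitoneOn_dotProduct_inv_mul_mul_inv {Φ : Matrix n n 𝕜} (hΦ : Φ.PosSemidef)
    (v : n → 𝕜) :
    AntitoneOn (fun t : ℝ => star v ⬝ᵥ ((((t : 𝕜) • (1 : Matrix n n 𝕜) + Φ)⁻¹ * Φ *
      ((t : 𝕜) • (1 : Matrix n n 𝕜) + Φ)⁻¹) *ᵥ v)) (Set.Ioi 0) := by
  simp only [ofReal_smul_one_eq_algebraMap, nonsing_inv_eq_ringInverse]
  exact (monotone_dotProduct_mulVec v).comp_antitoneOn
    (antitoneOn_inverse_mul_mul_inverse hΦ.nonneg)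

end Matrix

/-- Matrix form of the power monotonicity result: for a Hermitian positive
semidefinite `Φ` and any `v`, the matrix `λ·1 + Φ` is invertible for `λ > 0`, and
`λ ↦ vᴴ (λ·1 + Φ)⁻¹ Φ (λ·1 + Φ)⁻¹ v` is antitone on `(0, ∞)`. -/
theorem stmt_14 (N : ℕ) (Φ : Matrix (Fin N) (Fin N) ℂ) (hΦ : Φ.PosSemidef)
    (v : Fin N → ℂ) :
    (∀ lam : ℝ, 0 < lam →
      IsUnit ((lam : ℂ) • (1 : Matrix (Fin N) (Fin N) ℂ) + Φ)) ∧
    AntitoneOn (fun lam : ℝ =>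
      star v ⬝ᵥ ((((lam : ℂ) • (1 : Matrix (Fin N) (Fin N) ℂ) + Φ)⁻¹ * Φ *
        (((lam : ℂ) • (1 : Matrix (Fin N) (Fin N) ℂ) + Φ)⁻¹)) *ᵥ v))
      (Set.Ioi 0) :=
  ⟨fun _ => hΦ.isUnit_ofReal_smul_one_add, hΦ.antitoneOn_dotProduct_inv_mul_mul_inv v⟩
end
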